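/- arXiv:2004.05410 — 2 statements merged into one kernel-verified Lean document; each statement's English description precedes it below -/
import Mathlib

section
/- Let H be a k-vertex graph with an isolated vertex u and wt(H) > k − 2 (or no edges), and let H' = H plus a dominating vertex v*. For any n ≥ k + 1, write n = qk + r with 0 ≤ r < k, and let G be the disjoint union of q copies of K_k and one copy of K_r. Then G is H'-saturated. -/
open SimpleGraph

/-- `H` has a copy in `G`: an injective graph homomorphism (i.e. a subgraph isomorphic to `H`). -/
def hasCopy {α β : Type*} (H : SimpleGraph α) (G : SimpleGraph β) : Prop :=
  ∃ f : H →g G, Function.Injective f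

/-- `G` is `H`-saturated: `H`-free, and adding any missing edge creates a copy of `H`. -/
def isSat {α β : Type*} (H : SimpleGraph α) (G : SimpleGraph β) : Prop :=
  ¬ hasCopy H G ∧ ∀ x y : β, x ≠ y → ¬ G.Adj x y →
    hasCopy H (G ⊔ SimpleGraph.fromEdgeSet {s(x, y)})

/-- The weight of an edge `uv`: with `deg u ≤ deg v`,
`wt(uv) = 2|N(u) ∩ N(v)| + |N(v) \ N(u)|`. -/
noncomputable def edgeWt {α : Type*} (H : SimpleGraph α) (u v : α) : ℕ :=
  if (H.neighborSet u).ncard ≤ (H.neighborSet v).ncard then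
    2 * (H.neighborSet u ∩ H.neighborSet v).ncard + ((H.neighborSet v) \ (H.neighborSet u)).ncard
  else
    2 * (H.neighborSet u ∩ H.neighborSet v).ncard + ((H.neighborSet u) \ (H.neighborSet v)).ncard

/-- The weight of a graph: the minimum weight of an edge. -/
noncomputable def graphWt {α : Type*} (H : SimpleGraph α) : ℕ :=
  sInf {w | ∃ u v, H.Adj u v ∧ w = edgeWt H u v}

/-- The saturation number: minimum number of edges of an `H`-saturated graph on `n` vertices. -/
noncomputable def satNum {α : Type*} (H : SimpleGraph α) (n : ℕ) : ℕ :=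
  sInf {m | ∃ G : SimpleGraph (Fin n), isSat H G ∧ Nat.card G.edgeSet = m}

/-- The graph obtained from `H` by adding a dominating vertex (`none`). -/
def addDom {α : Type*} (H : SimpleGraph α) : SimpleGraph (Option α) :=
  SimpleGraph.fromRel (fun x y => x = none ∨ ∃ u v, x = some u ∧ y = some v ∧ H.Adj u v)


/-- The graph on `Fin n` consisting of blocks (cliques) of size `k`: for `n = q k + r`
with `0 <= r < k`, this is `q` disjoint copies of `K_k` together with one copy of `K_r`. -/
def blocksGraph (n k : ℕ) : SimpleGraph (Fin n) :=
  SimpleGraph.fromRel (fun x y => x.val / k = y.val / k)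

/-! A copy of `H'` puts the dominating vertex and all `k` vertices of `H` into one closed
neighbourhood, i.e. into one block of at most `k` vertices, so `G` is `H'`-free. If a missing
edge `xy` joins two blocks, say with the block of `x` coming first (hence full), map `v*` to `x`,
the isolated vertex `u` to `y`, and the other `k - 1` vertices of `H` onto the rest of the
block of `x`. -/

section Blocks

variable {n k : ℕ}

lemma blocksGraph_adj {a b : Fin n} :
    (blocksGraph n k).Adj a b ↔ a ≠ b ∧ a.val / k = b.val / k := by
  simp only [blocksGraph, fromRel_adj]
  exact and_congr_right fun _ => ⟨fun h => h.elim id Eq.symm, Or.inl⟩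

lemma blocksGraph_isClique_block (c : ℕ) :
    (blocksGraph n k).IsClique {z | z.val / k = c} := fun _ ha _ hb hab =>
  blocksGraph_adj.2 ⟨hab, ha.trans hb.symm⟩

lemma card_block_le (hk : 0 < k) (c : ℕ) : Fintype.card {z : Fin n // z.val / k = c} ≤ k := by
  refine (Fintype.card_le_of_injective (fun z => (⟨z.1.val % k, Nat.mod_lt _ hk⟩ : Fin k))
    fun z w hzw => ?_).trans_eq (Fintype.card_fin k)
  have hmod : z.1.val % k = w.1.val % k := congrArg Fin.val hzw
  have hdiv : z.1.val / k = w.1.val / k := z.2.trans w.2.symm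
  ext
  rw [← Nat.div_add_mod z.1.val k, ← Nat.div_add_mod w.1.val k, hmod, hdiv]

def blockEmbedding (c : ℕ) (h : k * c + k ≤ n) : Fin k ↪ Fin n :=
  (Fin.natAddEmb (k * c)).trans (Fin.castLEEmb h)

lemma blockEmbedding_val {c : ℕ} (h : k * c + k ≤ n) (j : Fin k) :
    (blockEmbedding c h j).val = k * c + j := rfl

lemma blockEmbedding_div {c : ℕ} (h : k * c + k ≤ n) (j : Fin k) :
    (blockEmbedding c h j).val / k = c := by
  rw [blockEmbedding_val, Nat.mul_add_div (Fin.pos j), Nat.div_eq_of_lt j.isLt, add_zero]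

lemma block_full_of_div_lt {x y : Fin n} (hxy : x.val / k < y.val / k) :
    k * (x.val / k) + k ≤ n := by
  have := Nat.mul_le_mul_left k (Nat.succ_le_of_lt hxy)
  have := Nat.mul_div_le y.val k
  have := y.isLt
  rw [Nat.mul_succ] at *
  omega

end Blocks

section AddDom

variable {α : Type*} (H : SimpleGraph α)

lemma addDom_adj_none_some (a : α) : (addDom H).Adj none (some a) :=
  ⟨(Option.some_ne_none a).symm, Or.inl (Or.inl rfl)⟩

lemma addDom_adj_some_some {a b : α} (h : (addDom H).Adj (some a) (some b)) : H.Adj a b := by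
  obtain ⟨-, h | h⟩ := h <;> obtain h | ⟨a', b', ha, hb, hab⟩ := h
  all_goals simp only [reduceCtorEq, Option.some.injEq] at *
  · exact ha ▸ hb ▸ hab
  · exact ha ▸ hb ▸ hab.symm

lemma not_hasCopy_addDom_blocksGraph [Fintype α] [Nonempty α] (n : ℕ) :
    ¬ hasCopy (addDom H) (blocksGraph n (Fintype.card α)) := by
  rintro ⟨f, hf⟩
  set c := (f none).val / Fintype.card α
  have hblock : ∀ p, (f p).val / Fintype.card α = c
    | none => rfl
    | some a => (blocksGraph_adj.1 (f.map_adj (addDom_adj_none_some H a))).2.symm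
  have hcard := Fintype.card_le_of_injective
    (fun p => (⟨f p, hblock p⟩ : {z : Fin n // z.val / Fintype.card α = c}))
    fun p q hpq => hf (congrArg Subtype.val hpq)
  have := card_block_le (n := n) (Fintype.card_pos (α := α)) c
  rw [Fintype.card_option] at hcard
  omega

/-- `u` is sent to `y`, and `v*` takes its place `g u` in the clique. -/
lemma hasCopy_addDom_of_isClique {β : Type*} {G : SimpleGraph β} {u : α}
    (hu : ∀ w, ¬ H.Adj u w) (g : α ↪ β) (hg : G.IsClique (Set.range g)) {y : β}
    (hy : y ∉ Set.range g) (hadj : G.Adj (g u) y) : hasCopy (addDom H) G := by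
  classical
  have hclique {a b : α} (hab : a ≠ b) : G.Adj (g a) (g b) :=
    hg ⟨a, rfl⟩ ⟨b, rfl⟩ (g.injective.ne hab)
  have hne_u {a b : α} (hab : H.Adj a b) : a ≠ u := fun h => hu b (h ▸ hab)
  let f : Option α → β := fun p => p.elim (g u) (Function.update g u y)
  have hf_none_some (a : α) : G.Adj (f none) (f (some a)) := by
    by_cases ha : a = u
    · subst ha; simpa [f] using hadj
    · simpa [f, ha] using hclique (Ne.symm ha)
  have hinj : Function.Injective f := by
    rintro (_ | a) (_ | b) hab
    · rfl
    · exact absurd hab (hf_none_some b).ne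
    · exact absurd hab.symm (hf_none_some a).ne
    · have hy' (c : α) : g c ≠ y := fun h => hy ⟨c, h⟩
      by_cases ha : a = u <;> by_cases hb : b = u <;>
        simp_all [f, Function.update_apply, g.injective.eq_iff]
  refine ⟨⟨f, fun {p q} hpq => ?_⟩, hinj⟩
  rcases p with _ | a <;> rcases q with _ | b
  · exact absurd rfl hpq.ne
  · exact hf_none_some b
  · exact (hf_none_some a).symm
  · have hab := addDom_adj_some_some H hpq
    simpa [f, hne_u hab, hne_u hab.symm] using hclique hab.ne

end AddDom

lemma hasCopy_addDom_blocksGraph_sup_edge {α : Type*} [Fintype α] (H : SimpleGraph α) {u : α}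
    (hu : ∀ w, ¬ H.Adj u w) {n : ℕ} {x y : Fin n}
    (hxy : x.val / Fintype.card α < y.val / Fintype.card α) :
    hasCopy (addDom H) (blocksGraph n (Fintype.card α) ⊔ fromEdgeSet {s(x, y)}) := by
  set k := Fintype.card α
  have hk : 0 < k := Fintype.card_pos_iff.2 ⟨u⟩
  let e : α ≃ Fin k := (Fintype.equivFin α).trans
    (Equiv.swap (Fintype.equivFin α u) ⟨x.val % k, Nat.mod_lt _ hk⟩)
  have hfull := block_full_of_div_lt hxy
  let g : α ↪ Fin n := e.toEmbedding.trans (blockEmbedding _ hfull)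
  have hg_block (a : α) : (g a).val / k = x.val / k := blockEmbedding_div hfull _
  have hgu : g u = x := by
    ext
    simp [g, e, blockEmbedding_val, Nat.div_add_mod]
  refine hasCopy_addDom_of_isClique H hu g (y := y) ?_ ?_ ?_
  · exact ((blocksGraph_isClique_block _).subset (by rintro _ ⟨a, rfl⟩; exact hg_block a)).mono
      le_sup_left
  · rintro ⟨a, ha⟩
    exact hxy.ne (ha ▸ hg_block a).symm
  · rw [hgu]
    exact Or.inr ⟨rfl, fun h => hxy.ne (h ▸ rfl)⟩

theorem stmt9_general {α : Type*} [Fintype α] (H : SimpleGraph α) (k : ℕ) (hk : Fintype.card α = k)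
    (u : α) (hu : ∀ w, ¬ H.Adj u w) (n : ℕ) :
    isSat (addDom H) (blocksGraph n k) := by
  subst hk
  have : Nonempty α := ⟨u⟩
  refine ⟨not_hasCopy_addDom_blocksGraph H n, fun x y hne hnadj => ?_⟩
  have hblocks : x.val / Fintype.card α ≠ y.val / Fintype.card α :=
    fun h => hnadj (blocksGraph_adj.2 ⟨hne, h⟩)
  rcases hblocks.lt_or_gt with hxy | hyx
  · exact hasCopy_addDom_blocksGraph_sup_edge H hu hxy
  · rw [Sym2.eq_swap]
    exact hasCopy_addDom_blocksGraph_sup_edge H hu hyx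

/-- If the `k`-vertex graph `H` has an isolated vertex and either no edges or
`wt(H) > k - 2`, then for any `n >= k + 1` the disjoint union of cliques `q K_k ∪ K_r`
(where `n = q k + r`, `0 <= r < k`) is saturated for `H' = H` plus a dominating vertex. -/
theorem stmt9 {α : Type*} [Fintype α] (H : SimpleGraph α) (k : ℕ) (hk : Fintype.card α = k)
    (u : α) (hu : ∀ w, ¬ H.Adj u w)
    (hbig : (∀ a b, ¬ H.Adj a b) ∨ k - 2 < graphWt H)
    (n : ℕ) (hn : k + 1 ≤ n) :
    isSat (addDom H) (blocksGraph n k) :=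
  stmt9_general H k hk u hu n
end

section
/- Let 2 ≤ p_1 ≤ ⋯ ≤ p_m and H = K_{p_1} ∪ ⋯ ∪ K_{p_m}. Then there exist constants c_H, c'_H depending only on H such that (p_1 − 2)·n − c'_H ≤ sat(H, n) ≤ (p_1 − 2)·n + c_H for all n ≥ p_1 + ⋯ + p_m. -/
open SimpleGraph

/-- The disjoint union of cliques `K_{p 0} ∪ ... ∪ K_{p (m-1)}`. -/
def cliqueUnion (m : ℕ) (p : Fin m → ℕ) : SimpleGraph (Σ i : Fin m, Fin (p i)) :=
  SimpleGraph.fromRel (fun x y => x.1 = y.1)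

/-!
Lower bound: when an edge `xy` is added to an `H`-saturated graph, the new copy of `H` uses `xy`
as an edge of some clique `K_{p_i}`, whose other `p_i - 2 ≥ p_1 - 2` vertices are common
neighbours of `x` and `y`. A graph in which any two non-adjacent vertices have `k` common
neighbours has at least `k n - 2k²` edges: either all degrees are at least `2k`, or a vertex `u`
of degree `< 2k` receives `k` edges into its neighbourhood from each of the `≥ n - 2k` vertices
outside its closed neighbourhood.

Upper bound: let `A` be a set of `p_1 - 2` vertices joined to all others, inside a clique `B` of
`p_1 + ⋯ + p_m - 1` vertices, all remaining pairs being non-edges. This graph has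
`(p_1 - 2) n + O(1)` edges. It contains no `H`, since every clique of `H` would have to lie in
`B`, which is one vertex too small; and a new edge `xy` with `y ∉ B` turns `A ∪ {x, y}` into a
`K_{p_1}`, while the other cliques fit into `B \ (A ∪ {x})`.
-/

open SimpleGraph Finset

variable {α β V : Type*}

theorem satNum_le_card_edgeSet {H : SimpleGraph α} {n : ℕ} {G : SimpleGraph (Fin n)}
    (hG : isSat H G) : satNum H n ≤ Nat.card G.edgeSet :=
  Nat.sInf_le ⟨G, hG, rfl⟩

theorem exists_isSat_card_edgeSet_eq_satNum {H : SimpleGraph α} {n : ℕ}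
    (h : ∃ G : SimpleGraph (Fin n), isSat H G) :
    ∃ G : SimpleGraph (Fin n), isSat H G ∧ Nat.card G.edgeSet = satNum H n :=
  let ⟨G, hG⟩ := h
  Nat.sInf_mem (s := {m | ∃ G : SimpleGraph (Fin n), isSat H G ∧ Nat.card G.edgeSet = m})
    ⟨_, G, hG, rfl⟩

theorem exists_adj_ncard_commonNeighbors_le [Finite β] {H : SimpleGraph α} {G : SimpleGraph β}
    {x y : β} (hfree : ¬ hasCopy H G) (hcopy : hasCopy H (G ⊔ edge x y)) :
    ∃ u v, H.Adj u v ∧ (H.commonNeighbors u v).ncard ≤ (G.commonNeighbors x y).ncard := by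
  obtain ⟨f, hf⟩ := hcopy
  obtain ⟨u, v, huv, hu, hv⟩ : ∃ u v, H.Adj u v ∧ f u = x ∧ f v = y := by
    by_contra! hne
    refine hfree ⟨⟨f, fun {a b} hab => (f.map_adj hab).resolve_right fun h => ?_⟩, hf⟩
    rcases ((edge_adj ..).mp h).1 with ⟨ha, hb⟩ | ⟨ha, hb⟩
    · exact hne a b hab ha hb
    · exact hne b a hab.symm hb ha
  refine ⟨u, v, huv, Set.ncard_le_ncard_of_injOn f (fun w hw => ?_) hf.injOn (Set.toFinite _)⟩
  rw [mem_commonNeighbors] at hw ⊢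
  -- `f w` differs from both endpoints of the new edge, so its edges to them are old ones.
  have hnew : ∀ z, ¬ (edge x y).Adj z (f w) := by
    intro z hz
    rcases ((edge_adj ..).mp hz).1 with ⟨-, h⟩ | ⟨-, h⟩
    · exact hw.2.ne' (hf (h.trans hv.symm))
    · exact hw.1.ne' (hf (h.trans hu.symm))
  exact ⟨(hu ▸ f.map_adj hw.1).resolve_right (hnew _),
    (hv ▸ f.map_adj hw.2).resolve_right (hnew _)⟩

section CliqueUnion

variable {m : ℕ} {p : Fin m → ℕ}

theorem cliqueUnion_adj {u v : Σ i : Fin m, Fin (p i)} :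
    (cliqueUnion m p).Adj u v ↔ u ≠ v ∧ u.1 = v.1 := by
  simp only [cliqueUnion, fromRel_adj]
  tauto

theorem ncard_commonNeighbors_cliqueUnion {u v : Σ i : Fin m, Fin (p i)}
    (huv : (cliqueUnion m p).Adj u v) :
    ((cliqueUnion m p).commonNeighbors u v).ncard = p u.1 - 2 := by
  obtain ⟨i, a⟩ := u
  obtain ⟨j, b⟩ := v
  obtain ⟨hne, rfl : i = j⟩ := cliqueUnion_adj.mp huv
  have hblock : (cliqueUnion m p).commonNeighbors ⟨i, a⟩ ⟨i, b⟩ =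
      Set.range (Sigma.mk i) \ {⟨i, a⟩, ⟨i, b⟩} := by
    ext ⟨j, c⟩
    simp only [mem_commonNeighbors, cliqueUnion_adj, Set.mem_sdiff, Set.mem_range,
      Set.mem_insert_iff, Set.mem_singleton_iff]
    constructor
    · rintro ⟨⟨h₁, rfl⟩, h₂, -⟩
      exact ⟨⟨c, rfl⟩, by tauto⟩
    · rintro ⟨⟨c, ⟨⟩⟩, h⟩
      exact ⟨⟨by tauto, rfl⟩, by tauto, rfl⟩
  rw [hblock, Set.ncard_sdiff (by simp [Set.insert_subset_iff]),
    Set.ncard_range_of_injective sigma_mk_injective, Set.ncard_pair hne, Nat.card_eq_fintype_card,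
    Fintype.card_fin]

theorem le_ncard_commonNeighbors_of_isSat [Finite β] {G : SimpleGraph β} (i₀ : Fin m)
    (hp : ∀ i, p i₀ ≤ p i) (hG : isSat (cliqueUnion m p) G) {x y : β} (hxy : x ≠ y)
    (hnadj : ¬ G.Adj x y) : p i₀ - 2 ≤ (G.commonNeighbors x y).ncard := by
  obtain ⟨u, v, huv, hle⟩ := exists_adj_ncard_commonNeighbors_le hG.1 (hG.2 x y hxy hnadj)
  rw [ncard_commonNeighbors_cliqueUnion huv] at hle
  have := hp u.1
  omega

theorem hasCopy_cliqueUnion_of_isClique {G : SimpleGraph V} (i₀ : Fin m) {C D : Finset V}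
    (hCD : Disjoint C D) (hC : G.IsClique (C : Set V))
    (hD : G.IsClique (D : Set V)) (hpC : p i₀ ≤ #C) (hpD : ∑ i, p i - p i₀ ≤ #D) :
    hasCopy (cliqueUnion m p) G := by
  classical
  have hcard₀ : Fintype.card {z : Σ i, Fin (p i) // z.1 = i₀} = p i₀ := by
    rw [Fintype.card_congr (Equiv.sigmaSubtype i₀), Fintype.card_fin]
  obtain ⟨e₀⟩ : Nonempty ({z : Σ i, Fin (p i) // z.1 = i₀} ↪ C) :=
    Function.Embedding.nonempty_of_card_le (by simpa [hcard₀] using hpC)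
  obtain ⟨e₁⟩ : Nonempty ({z : Σ i, Fin (p i) // ¬ z.1 = i₀} ↪ D) :=
    Function.Embedding.nonempty_of_card_le <| by
      simpa [Fintype.card_subtype_compl, hcard₀] using hpD
  let f : (Σ i, Fin (p i)) → V := fun z => if h : z.1 = i₀ then e₀ ⟨z, h⟩ else e₁ ⟨z, h⟩
  have hf : Function.Injective f := by
    intro z z' hzz'
    by_cases h : z.1 = i₀ <;> by_cases h' : z'.1 = i₀ <;> simp only [f, h, h', dite_true,
      dite_false] at hzz'
    · exact congrArg Subtype.val (e₀.injective (Subtype.ext hzz'))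
    · exact ((disjoint_coe.mpr hCD).ne_of_mem (e₀ _).2 (e₁ _).2 hzz').elim
    · exact ((disjoint_coe.mpr hCD).ne_of_mem (e₀ _).2 (e₁ _).2 hzz'.symm).elim
    · exact congrArg Subtype.val (e₁.injective (Subtype.ext hzz'))
  refine ⟨⟨f, fun {z z'} hzz' => ?_⟩, hf⟩
  obtain ⟨hne, hblock⟩ := cliqueUnion_adj.mp hzz'
  have hfne : f z ≠ f z' := hf.ne hne
  by_cases h : z.1 = i₀
  · have h' : z'.1 = i₀ := hblock ▸ h
    simp only [f, h, h', dite_true] at hfne ⊢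
    exact hC (e₀ _).2 (e₀ _).2 hfne
  · have h' : ¬ z'.1 = i₀ := hblock ▸ h
    simp only [f, h, h', dite_false] at hfne ⊢
    exact hD (e₁ _).2 (e₁ _).2 hfne

end CliqueUnion

section EdgeCount

variable [Fintype V] {G : SimpleGraph V} [DecidableRel G.Adj]

theorem sum_card_filter_adj_le_card_edgeFinset {S T : Finset V} (hST : Disjoint S T) :
    ∑ y ∈ T, #{x ∈ S | G.Adj x y} ≤ #G.edgeFinset := by
  classical
  have hT : ∑ y ∈ T, #{x ∈ S | G.Adj x y} ≤ ∑ y ∈ T, G.degree y :=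
    sum_le_sum fun y _ => card_le_card fun x hx => by simpa using (mem_filter.mp hx).2.symm
  have hS : ∑ y ∈ T, #{x ∈ S | G.Adj x y} ≤ ∑ x ∈ S, G.degree x := by
    calc ∑ y ∈ T, #{x ∈ S | G.Adj x y}
        = ∑ x ∈ S, #(T.bipartiteAbove G.Adj x) :=
          (sum_card_bipartiteAbove_eq_sum_card_bipartiteBelow G.Adj).symm
      _ ≤ ∑ x ∈ S, G.degree x :=
          sum_le_sum fun x _ => card_le_card fun y hy => by simpa using (mem_filter.mp hy).2
  have hdeg : ∑ y ∈ T, G.degree y + ∑ x ∈ S, G.degree x ≤ 2 * #G.edgeFinset := by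
    rw [← sum_union hST.symm, ← sum_degrees_eq_twice_card_edges]
    exact sum_le_sum_of_subset (subset_univ _)
  omega

theorem mul_card_le_card_edgeFinset_add {k : ℕ}
    (h : ∀ x y, x ≠ y → ¬ G.Adj x y → k ≤ (G.commonNeighbors x y).ncard) :
    k * Fintype.card V ≤ #G.edgeFinset + 2 * k ^ 2 := by
  classical
  by_cases hδ : ∀ v, 2 * k ≤ G.degree v
  · have : 2 * k * Fintype.card V ≤ 2 * #G.edgeFinset := by
      rw [← sum_degrees_eq_twice_card_edges, ← card_univ, mul_comm, ← smul_eq_mul]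
      exact card_nsmul_le_sum _ _ _ fun v _ => hδ v
    nlinarith
  push Not at hδ
  obtain ⟨u, hu⟩ := hδ
  set S := G.neighborFinset u
  set T := (univ \ S).erase u
  have hcardT : Fintype.card V ≤ #T + 2 * k := by
    have : #T = Fintype.card V - G.degree u - 1 := by
      rw [card_erase_of_mem (by simp [S]), card_sdiff_of_subset (subset_univ _), card_univ,
        card_neighborFinset_eq_degree]
    have := G.degree_lt_card_verts u
    omega
  have hST : Disjoint S T := disjoint_sdiff.mono_right (erase_subset _ _)
  have hk : ∀ y ∈ T, k ≤ #{x ∈ S | G.Adj x y} := by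
    intro y hy
    obtain ⟨hyu, hy⟩ : y ≠ u ∧ ¬ G.Adj u y := by simpa [T, S] using hy
    have hcommon : G.commonNeighbors u y = ↑({x ∈ S | G.Adj x y}) := by
      ext x
      simp [S, mem_commonNeighbors, adj_comm]
    have := h u y (Ne.symm hyu) hy
    rwa [hcommon, Set.ncard_coe_finset] at this
  have := (card_nsmul_le_sum T _ k hk).trans (sum_card_filter_adj_le_card_edgeFinset hST)
  rw [smul_eq_mul] at this
  nlinarith

end EdgeCount

section DomCliqueGraph

variable {m : ℕ} {p : Fin m → ℕ}

def domCliqueGraph (A B : Finset V) : SimpleGraph V :=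
  fromRel fun x y => x ∈ A ∨ y ∈ A ∨ (x ∈ B ∧ y ∈ B)

variable {A B : Finset V}

theorem domCliqueGraph_adj {x y : V} :
    (domCliqueGraph A B).Adj x y ↔ x ≠ y ∧ (x ∈ A ∨ y ∈ A ∨ (x ∈ B ∧ y ∈ B)) := by
  simp only [domCliqueGraph, fromRel_adj]
  tauto

theorem card_edgeSet_domCliqueGraph_le [Fintype V] :
    Nat.card (domCliqueGraph A B).edgeSet ≤ #A * Fintype.card V + #B ^ 2 := by
  classical
  have hsub : (domCliqueGraph A B).edgeFinset ⊆
      (A ×ˢ univ ∪ B ×ˢ B).image fun e => s(e.1, e.2) := by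
    intro e he
    induction e using Sym2.ind with
    | h x y =>
      rw [mem_edgeFinset, mem_edgeSet, domCliqueGraph_adj] at he
      simp only [mem_image, mem_union, mem_product, mem_univ, and_true]
      rcases he.2 with hx | hy | hxy
      · exact ⟨(x, y), Or.inl hx, rfl⟩
      · exact ⟨(y, x), Or.inl hy, Sym2.eq_swap⟩
      · exact ⟨(x, y), Or.inr hxy, rfl⟩
  rw [Nat.card_eq_fintype_card, ← edgeFinset_card]
  calc _ ≤ _ := card_le_card hsub
    _ ≤ #(A ×ˢ univ ∪ B ×ˢ B) := card_image_le
    _ ≤ _ := (card_union_le _ _).trans (by simp [card_product, sq])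

theorem not_hasCopy_cliqueUnion_domCliqueGraph (hAB : A ⊆ B) (hp : ∀ i, #A + 2 ≤ p i)
    (hB : #B < ∑ i, p i) : ¬ hasCopy (cliqueUnion m p) (domCliqueGraph A B) := by
  classical
  rintro ⟨f, hf⟩
  -- outside `B` a vertex has only the `#A` neighbours in `A`, too few for its clique
  have hmapsto : ∀ z, f z ∈ B := by
    rintro ⟨i, a⟩
    by_contra hz
    have hA : ∀ c ∈ univ.erase a, f ⟨i, c⟩ ∈ A := by
      intro c hc
      have hadj :=
        f.map_adj (cliqueUnion_adj.mpr ⟨sigma_mk_injective.ne (mem_erase.mp hc).1, rfl⟩)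
      rcases (domCliqueGraph_adj.mp hadj).2 with h | h | h
      · exact h
      · exact absurd (hAB h) hz
      · exact absurd h.2 hz
    have hcard := card_le_card_of_injOn (fun c => f ⟨i, c⟩) hA
      fun c _ c' _ h => sigma_mk_injective (β := fun j => Fin (p j)) (hf h)
    rw [card_erase_of_mem (mem_univ a), card_univ, Fintype.card_fin] at hcard
    have := hp i
    omega
  have hcard := card_le_card_of_injOn f (s := univ) (fun z _ => hmapsto z) hf.injOn
  simp only [card_univ, Fintype.card_sigma, Fintype.card_fin] at hcard
  omega

theorem hasCopy_cliqueUnion_domCliqueGraph_sup_edge (i₀ : Fin m) {x y : V}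
    (hxy : x ≠ y) (hx : x ∉ A) (hy : y ∉ B) (hAB : A ⊆ B) (hpA : p i₀ ≤ #A + 2)
    (hpB : ∑ i, p i - p i₀ + #A + 1 ≤ #B) :
    hasCopy (cliqueUnion m p) (domCliqueGraph A B ⊔ edge x y) := by
  classical
  have hyA : y ∉ A := fun h => hy (hAB h)
  refine hasCopy_cliqueUnion_of_isClique i₀ (C := insert x (insert y A)) (D := (B \ A).erase x)
    ?_ ?_ ?_ ?_ ?_
  · rw [Finset.disjoint_left]
    intro v hv hv'
    simp only [mem_insert, mem_erase, mem_sdiff] at hv hv'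
    rcases hv with rfl | rfl | hv
    · exact hv'.1 rfl
    · exact hy hv'.2.1
    · exact hv'.2.2 hv
  · intro v hv w hw hvw
    simp only [coe_insert, Set.mem_insert_iff, mem_coe] at hv hw
    rw [sup_adj, domCliqueGraph_adj, edge_adj]
    rcases hv with rfl | rfl | hv <;> rcases hw with rfl | rfl | hw <;> tauto
  · intro v hv w hw hvw
    simp only [coe_erase, coe_sdiff, Set.mem_sdiff, mem_coe, Set.mem_singleton_iff] at hv hw
    exact Or.inl (domCliqueGraph_adj.mpr ⟨hvw, Or.inr (Or.inr ⟨hv.1.1, hw.1.1⟩)⟩)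
  · rw [card_insert_of_notMem (by simp [hxy, hx]), card_insert_of_notMem hyA]
    exact hpA
  · have := pred_card_le_card_erase (s := B \ A) (a := x)
    rw [card_sdiff_of_subset hAB] at this
    omega

theorem isSat_cliqueUnion_domCliqueGraph (i₀ : Fin m) (hp : ∀ i, p i₀ ≤ p i)
    (hAB : A ⊆ B) (hA : #A + 2 = p i₀) (hB : #B + 1 = ∑ i, p i) :
    isSat (cliqueUnion m p) (domCliqueGraph A B) := by
  have hp₀ : p i₀ ≤ ∑ i, p i := single_le_sum (fun i _ => Nat.zero_le (p i)) (mem_univ i₀)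
  refine ⟨not_hasCopy_cliqueUnion_domCliqueGraph hAB (fun i => hA ▸ hp i) (by omega),
    fun x y hxy hnadj => ?_⟩
  obtain ⟨hx, hy, hxy'⟩ : x ∉ A ∧ y ∉ A ∧ ¬ (x ∈ B ∧ y ∈ B) := by
    simpa [domCliqueGraph_adj, hxy, not_or] using hnadj
  by_cases hyB : y ∈ B
  · have hxB : x ∉ B := fun hxB => hxy' ⟨hxB, hyB⟩
    rw [show s(x, y) = s(y, x) from Sym2.eq_swap]
    exact hasCopy_cliqueUnion_domCliqueGraph_sup_edge i₀ hxy.symm hy hxB hAB (by omega) (by omega)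
  · exact hasCopy_cliqueUnion_domCliqueGraph_sup_edge i₀ hxy hx hyB hAB (by omega) (by omega)

theorem exists_isSat_cliqueUnion_card_edgeSet_le [Fintype V] (i₀ : Fin m)
    (hp : ∀ i, p i₀ ≤ p i) (hp₀ : 2 ≤ p i₀) (hV : ∑ i, p i ≤ Fintype.card V) :
    ∃ G : SimpleGraph V, isSat (cliqueUnion m p) G ∧
      Nat.card G.edgeSet ≤ (p i₀ - 2) * Fintype.card V + (∑ i, p i - 1) ^ 2 := by
  classical
  have hp₀s : p i₀ ≤ ∑ i, p i := single_le_sum (fun i _ => Nat.zero_le (p i)) (mem_univ i₀)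
  obtain ⟨B, -, hB⟩ := exists_subset_card_eq (s := (univ : Finset V)) (n := ∑ i, p i - 1)
    (by rw [card_univ]; omega)
  obtain ⟨A, hAB, hA⟩ := exists_subset_card_eq (s := B) (n := p i₀ - 2) (by omega)
  refine ⟨domCliqueGraph A B, isSat_cliqueUnion_domCliqueGraph i₀ hp hAB (by omega) (by omega), ?_⟩
  rw [← hA, ← hB]
  exact card_edgeSet_domCliqueGraph_le

end DomCliqueGraph

/-- For `H = K_{p_1} ∪ ... ∪ K_{p_m}` with `2 <= p_1 <= ... <= p_m`, there exist
constants `c_H, c'_H` with `(p_1 - 2) n - c'_H <= sat(H, n) <= (p_1 - 2) n + c_H`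
for all `n >= p_1 + ... + p_m`. -/
theorem stmt16 (m : ℕ) (hm : 0 < m) (p : Fin m → ℕ) (hp : ∀ i, 2 ≤ p i)
    (hmono : Monotone p) :
    ∃ c c' : ℤ, ∀ n : ℕ, ∑ i, p i ≤ n →
      ((p ⟨0, hm⟩ : ℤ) - 2) * n - c' ≤ (satNum (cliqueUnion m p) n : ℤ) ∧
        (satNum (cliqueUnion m p) n : ℤ) ≤ ((p ⟨0, hm⟩ : ℤ) - 2) * n + c := by
  classical
  set k := p ⟨0, hm⟩ - 2
  have hk : (k : ℤ) = p ⟨0, hm⟩ - 2 := by have := hp ⟨0, hm⟩; omega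
  have hmin : ∀ i, p ⟨0, hm⟩ ≤ p i := fun i => hmono (Fin.mk_le_mk.mpr i.val.zero_le)
  refine ⟨((∑ i, p i - 1) ^ 2 : ℕ), (2 * k ^ 2 : ℕ), fun n hn => ?_⟩
  obtain ⟨G₀, hsat₀, hcard₀⟩ := exists_isSat_cliqueUnion_card_edgeSet_le (V := Fin n) ⟨0, hm⟩
    hmin (hp _) (by simpa using hn)
  have hup := satNum_le_card_edgeSet hsat₀
  obtain ⟨G, hsat, hG⟩ := exists_isSat_card_edgeSet_eq_satNum ⟨G₀, hsat₀⟩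
  have hlow := mul_card_le_card_edgeFinset_add (G := G) (k := k)
    fun x y hxy hnadj => le_ncard_commonNeighbors_of_isSat ⟨0, hm⟩ hmin hsat hxy hnadj
  rw [edgeFinset_card, Fintype.card_fin, ← Nat.card_eq_fintype_card, hG] at hlow
  rw [Fintype.card_fin] at hcard₀
  rw [← hk]
  constructor
  · push_cast
    linarith [(by exact_mod_cast hlow : (k * n : ℤ) ≤ satNum (cliqueUnion m p) n + 2 * k ^ 2)]
  · push_cast
    linarith [(by exact_mod_cast hup.trans hcard₀ :
      (satNum (cliqueUnion m p) n : ℤ) ≤ k * n + (∑ i, p i - 1 : ℕ) ^ 2)]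
end
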